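/- arXiv:2401.12669 — 2 statements merged into one kernel-verified Lean document; each statement's English description precedes it below -/
import Mathlib

section
/- Suppose x̂ minimizes x ↦ ∑_{j=1}^T λ_j g^{(j)}(x) over a convex set C, where λ_1 ≥ ... ≥ λ_T ≥ 0 with λ_{T+1} = 0, and suppose λ_j − λ_{j+1} > 0 for some fixed j. Then there exists a tolerance vector ε ∈ ℝ^T such that x̂ is an optimal solution of the ε-constraint problem: minimize G^(j)(x) subject to G^(t)(x) ≤ ε_t for all t ≠ j and x ∈ C. (One may take ε_t = G^(t)(x̂).) -/
noncomputable def sortAsc {T : ℕ} (v : Fin T → ℝ) : List ℝ :=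
  Multiset.sort (Multiset.map v Finset.univ.val) (· ≤ ·)

noncomputable def sumSmallest {T : ℕ} (v : Fin T → ℝ) (j : ℕ) : ℝ :=
  ∑ i ∈ Finset.range j, (sortAsc v).getD i 0

noncomputable def cvar {T : ℕ} (v : Fin T → ℝ) (j : ℕ) : ℝ :=
  -(1 / (j : ℝ)) * sumSmallest v j

noncomputable def topSum {T : ℕ} (v : Fin T → ℝ) (t : ℕ) : ℝ :=
  ∑ i ∈ Finset.range t, (sortAsc v).reverse.getD i 0

noncomputable def nthLargest {T : ℕ} (v : Fin T → ℝ) (j : ℕ) : ℝ :=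
  (sortAsc v).reverse.getD (j - 1) 0

/- Abel summation rewrites the OWA objective `∑ λ_t g^{(t)}` as the weighted sum
`∑ (λ_t - λ_{t+1}) G^{(t)}` of the partial top sums, with nonnegative weights and a positive weight
on `G^{(j)}`. A minimizer of a weighted sum with a positive weight on one objective minimizes that
objective among the points that do no worse than it on all the others. -/

open Finset

theorem sum_Icc_sub_succ_mul_sum_Icc {R : Type*} [CommRing R] (T : ℕ) (lam a : ℕ → R) :
    ∑ t ∈ Icc 1 T, (lam t - lam (t + 1)) * ∑ i ∈ Icc 1 t, a i
      = ∑ i ∈ Icc 1 T, lam i * a i - lam (T + 1) * ∑ i ∈ Icc 1 T, a i := by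
  induction T with
  | zero => simp
  | succ T ih =>
    simp only [sum_Icc_succ_top (Nat.le_add_left 1 T), ih]
    ring

theorem topSum_eq_sum_nthLargest {T : ℕ} (v : Fin T → ℝ) (t : ℕ) :
    topSum v t = ∑ i ∈ Icc 1 t, nthLargest v i := by
  induction t with
  | zero => simp [topSum]
  | succ t ih =>
    rw [sum_Icc_succ_top (Nat.le_add_left 1 t), ← ih]
    simp [topSum, sum_range_succ, nthLargest]

theorem sum_mul_nthLargest_eq_sum_sub_succ_mul_topSum {T : ℕ} (v : Fin T → ℝ) (lam : ℕ → ℝ)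
    (hlamT : lam (T + 1) = 0) :
    ∑ i ∈ Icc 1 T, lam i * nthLargest v i
      = ∑ t ∈ Icc 1 T, (lam t - lam (t + 1)) * topSum v t := by
  simp only [topSum_eq_sum_nthLargest, sum_Icc_sub_succ_mul_sum_Icc, hlamT, zero_mul, sub_zero]

theorem le_of_sum_mul_le_sum_mul {ι R : Type*} [Semiring R] [LinearOrder R]
    [IsStrictOrderedRing R] {s : Finset ι} {w a b : ι → R} {j : ι} (hj : j ∈ s)
    (hw : ∀ t ∈ s, 0 ≤ w t) (hwj : 0 < w j) (hba : ∀ t ∈ s, t ≠ j → b t ≤ a t)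
    (hsum : ∑ t ∈ s, w t * a t ≤ ∑ t ∈ s, w t * b t) :
    a j ≤ b j := by
  by_contra! hlt
  refine hsum.not_gt (sum_lt_sum (fun t ht => ?_) ⟨j, hj, mul_lt_mul_of_pos_left hlt hwj⟩)
  rcases eq_or_ne t j with rfl | htj
  · exact mul_le_mul_of_nonneg_left hlt.le hwj.le
  · exact mul_le_mul_of_nonneg_left (hba t ht htj) (hw t ht)

theorem stmt_6_general {n T : ℕ} (C : Set (Fin n → ℝ))
    (g : Fin T → (Fin n → ℝ) → ℝ)
    (lam : ℕ → ℝ)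
    (hlam : ∀ j, 1 ≤ j → j ≤ T → lam (j + 1) ≤ lam j)
    (hlamT : lam (T + 1) = 0)
    (j : ℕ) (hj1 : 1 ≤ j) (hjT : j ≤ T) (hjpos : 0 < lam j - lam (j + 1))
    (xhat : Fin n → ℝ)
    (hopt : ∀ x ∈ C,
      ∑ j' ∈ Finset.Icc 1 T, lam j' * nthLargest (fun i => g i xhat) j'
        ≤ ∑ j' ∈ Finset.Icc 1 T, lam j' * nthLargest (fun i => g i x) j') :
    ∃ ε : ℕ → ℝ,
      (∀ t, 1 ≤ t → t ≤ T → t ≠ j → topSum (fun i => g i xhat) t ≤ ε t) ∧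
      (∀ x ∈ C, (∀ t, 1 ≤ t → t ≤ T → t ≠ j → topSum (fun i => g i x) t ≤ ε t) →
        topSum (fun i => g i xhat) j ≤ topSum (fun i => g i x) j) := by
  refine ⟨topSum (fun i => g i xhat), fun _ _ _ _ => le_rfl, fun x hx hfeas => ?_⟩
  have hsum := hopt x hx
  rw [sum_mul_nthLargest_eq_sum_sub_succ_mul_topSum _ _ hlamT,
    sum_mul_nthLargest_eq_sum_sub_succ_mul_topSum _ _ hlamT] at hsum
  refine le_of_sum_mul_le_sum_mul (mem_Icc.2 ⟨hj1, hjT⟩) (fun t ht => ?_) hjpos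
    (fun t ht htj => ?_) hsum
  · exact sub_nonneg.2 (hlam t (mem_Icc.1 ht).1 (mem_Icc.1 ht).2)
  · exact hfeas t (mem_Icc.1 ht).1 (mem_Icc.1 ht).2 htj

/-- If `x̂` minimizes the OWA objective over convex `C` and `λ_j - λ_{j+1} > 0`,
then there is a tolerance vector `ε` for which `x̂` is optimal for the
ε-constraint problem: minimize `G^(j)` subject to `G^(t) ≤ ε_t` for `t ≠ j`. -/
theorem stmt_6 {n T : ℕ} (C : Set (Fin n → ℝ)) (hC : Convex ℝ C)
    (g : Fin T → (Fin n → ℝ) → ℝ) (hg : ∀ i, ConvexOn ℝ C (g i))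
    (lam : ℕ → ℝ)
    (hlam : ∀ j, 1 ≤ j → j ≤ T → lam (j + 1) ≤ lam j)
    (hlamnn : ∀ j, 1 ≤ j → j ≤ T → 0 ≤ lam j)
    (hlamT : lam (T + 1) = 0)
    (j : ℕ) (hj1 : 1 ≤ j) (hjT : j ≤ T) (hjpos : 0 < lam j - lam (j + 1))
    (xhat : Fin n → ℝ) (hxhat : xhat ∈ C)
    (hopt : ∀ x ∈ C,
      ∑ j' ∈ Finset.Icc 1 T, lam j' * nthLargest (fun i => g i xhat) j'
        ≤ ∑ j' ∈ Finset.Icc 1 T, lam j' * nthLargest (fun i => g i x) j') :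
    ∃ ε : ℕ → ℝ,
      (∀ t, 1 ≤ t → t ≤ T → t ≠ j → topSum (fun i => g i xhat) t ≤ ε t) ∧
      (∀ x ∈ C, (∀ t, 1 ≤ t → t ≤ T → t ≠ j → topSum (fun i => g i x) t ≤ ε t) →
        topSum (fun i => g i xhat) j ≤ topSum (fun i => g i x) j) :=
  stmt_6_general C g lam hlam hlamT j hj1 hjT hjpos xhat hopt
end

section
/- (ε-constraint vs weighted sum, Ehrgott Thm 4.6 part 1) If x̂ minimizes ∑_{k=1}^p γ_k h_k(x) over x ∈ X with γ ∈ ℝ^p_{≥0} and γ_j > 0 for some fixed j, then x̂ is optimal for the ε-constraint problem: minimize h_j(x) over x ∈ X subject to h_k(x) ≤ h_k(x̂) for all k ≠ j. -/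
/-- Ehrgott Thm 4.6(1): a minimizer of a weighted sum with `γ ≥ 0`, `γ_j > 0`,
is optimal for the ε-constraint problem with thresholds `ε_k = h_k(x̂)`. -/
theorem stmt_8 {n p : ℕ} (X : Set (Fin n → ℝ)) (h : Fin p → (Fin n → ℝ) → ℝ)
    (γ : Fin p → ℝ) (hγ : ∀ k, 0 ≤ γ k) (j : Fin p) (hj : 0 < γ j)
    (xhat : Fin n → ℝ) (hxhat : xhat ∈ X)
    (hopt : ∀ x ∈ X, ∑ k, γ k * h k xhat ≤ ∑ k, γ k * h k x) :
    ∀ x ∈ X, (∀ k, k ≠ j → h k x ≤ h k xhat) → h j xhat ≤ h j x := by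
  intro x hx hcon
  have h1 := hopt x hx
  have e1 : ∑ k, γ k * h k xhat
      = γ j * h j xhat + ∑ k ∈ Finset.univ.erase j, γ k * h k xhat :=
    (Finset.add_sum_erase _ _ (Finset.mem_univ j)).symm
  have e2 : ∑ k, γ k * h k x
      = γ j * h j x + ∑ k ∈ Finset.univ.erase j, γ k * h k x :=
    (Finset.add_sum_erase _ _ (Finset.mem_univ j)).symm
  have h3 : ∑ k ∈ Finset.univ.erase j, γ k * h k x
      ≤ ∑ k ∈ Finset.univ.erase j, γ k * h k xhat := by
    apply Finset.sum_le_sum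
    intro k hk
    exact mul_le_mul_of_nonneg_left (hcon k (Finset.ne_of_mem_erase hk)) (hγ k)
  have h4 : γ j * h j xhat ≤ γ j * h j x := by
    rw [e1, e2] at h1; linarith
  exact le_of_mul_le_mul_left h4 hj
end
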